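/- arXiv:1804.06160 — 4 statements merged into one kernel-verified Lean document; each statement's English description precedes it below -/
import Mathlib

section
/- Let H be a bialgebra over a field k and A a left H-module algebra. Let F ∈ H ⊗ H be an invertible element satisfying the cocycle condition (F ⊗ 1)·((Δ ⊗ id)F) = (1 ⊗ F)·((id ⊗ Δ)F) in H ⊗ H ⊗ H. Writing F⁻¹ = Σᵢ f̄ᵢ ⊗ ḡᵢ, the twisted product a ⋆ b := Σᵢ (f̄ᵢ•a)(ḡᵢ•b) on A is associative: (a ⋆ b) ⋆ c = a ⋆ (b ⋆ c) for all a, b, c ∈ A. -/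
/-!
Write `ρ₂`, `ρ₃` for the actions of `H ⊗ H`, `H ⊗ H ⊗ H` on `A ⊗ A`, `A ⊗ A ⊗ A`, so that
`a ⋆ b = μ (ρ₂(F⁻¹) (a ⊗ b))`. The module-algebra axiom says exactly that `ρ₂(X)` commutes past
`μ ⊗ id` by turning into `ρ₃((Δ ⊗ id) X)`, hence
`(a ⋆ b) ⋆ c = μ (μ ⊗ id) ρ₃((Δ ⊗ id)(F⁻¹) · (F⁻¹ ⊗ 1)) (a ⊗ b ⊗ c)`, and symmetrically for
`a ⋆ (b ⋆ c)` with `(id ⊗ Δ)(F⁻¹) · (1 ⊗ F⁻¹)`. Inverting the cocycle condition for `F` shows that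
these two elements of `H ⊗ H ⊗ H` agree, and associativity of `A` finishes the proof.
-/

open TensorProduct

noncomputable section

variable {k H A : Type*} [Field k] [Ring H] [Bialgebra k H] [Ring A] [Algebra k A]

/-- The lift of an action `H → End A` to a map `H ⊗ H → End (A ⊗ A)`,
sending `h ⊗ h'` to `(h • ·) ⊗ (h' • ·)`. -/
def act2 (act : H →ₐ[k] Module.End k A) :
    H ⊗[k] H →ₗ[k] (A ⊗[k] A →ₗ[k] A ⊗[k] A) :=
  TensorProduct.homTensorHomMap (RingHom.id k) A A A A ∘ₗ
    TensorProduct.map act.toLinearMap act.toLinearMap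

/-- The twisted product `a ⋆ b = Σᵢ (f̄ᵢ • a)(ḡᵢ • b)` for `Finv = Σᵢ f̄ᵢ ⊗ ḡᵢ`. -/
def twistMul (act : H →ₐ[k] Module.End k A) (Finv : H ⊗[k] H) (x y : A) : A :=
  LinearMap.mul' k A (act2 act Finv (x ⊗ₜ[k] y))

section TensorAction

variable {R B C D M N P : Type*} [CommSemiring R]
  [Semiring B] [Algebra R B] [Semiring C] [Algebra R C] [Semiring D] [Algebra R D]
  [AddCommMonoid M] [Module R M] [AddCommMonoid N] [Module R N] [AddCommMonoid P] [Module R P]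

def tensorAct (ρ : B →ₐ[R] Module.End R M) (σ : C →ₐ[R] Module.End R N) :
    B ⊗[R] C →ₐ[R] Module.End R (M ⊗[R] N) :=
  Module.endTensorEndAlgHom.comp (Algebra.TensorProduct.map ρ σ)

@[simp]
lemma tensorAct_tmul (ρ : B →ₐ[R] Module.End R M) (σ : C →ₐ[R] Module.End R N) (b : B) (c : C) :
    tensorAct ρ σ (b ⊗ₜ c) = map (ρ b) (σ c) :=
  rfl

lemma tensorAct_assoc_symm_apply (ρ : B →ₐ[R] Module.End R M) (σ : C →ₐ[R] Module.End R N)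
    (τ : D →ₐ[R] Module.End R P) (Z : B ⊗[R] (C ⊗[R] D)) (v : M ⊗[R] (N ⊗[R] P)) :
    tensorAct (tensorAct ρ σ) τ ((Algebra.TensorProduct.assoc R R R B C D).symm Z)
        ((TensorProduct.assoc R M N P).symm v) =
      (TensorProduct.assoc R M N P).symm (tensorAct ρ (tensorAct σ τ) Z v) := by
  induction Z using TensorProduct.induction_on with
  | zero => simp
  | tmul b w =>
    induction w using TensorProduct.induction_on with
    | zero => simp
    | tmul c d => exact map_map_assoc_symm _ _ _ v
    | add w w' hw hw' => simp only [tmul_add, map_add, LinearMap.add_apply, hw, hw']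
  | add Z Z' hZ hZ' => simp only [map_add, LinearMap.add_apply, hZ, hZ']

end TensorAction

section ModuleAlgebra

variable {R H A C N : Type*} [CommSemiring R] [Semiring H] [Bialgebra R H]
  [Semiring A] [Algebra R A] [Semiring C] [Algebra R C] [AddCommMonoid N] [Module R N]

lemma mul'_rTensor_mul'_assoc_symm (v : A ⊗[R] (A ⊗[R] A)) :
    LinearMap.mul' R A ((LinearMap.mul' R A).rTensor A ((TensorProduct.assoc R A A A).symm v)) =
      LinearMap.mul' R A ((LinearMap.mul' R A).lTensor A v) := by
  induction v using TensorProduct.induction_on with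
  | zero => simp
  | tmul a w =>
    induction w using TensorProduct.induction_on with
    | zero => simp
    | tmul b c => simp [mul_assoc]
    | add w w' hw hw' => simp only [tmul_add, map_add, hw, hw']
  | add v v' hv hv' => simp only [map_add, hv, hv']

variable {ρ : H →ₐ[R] Module.End R A}
  (hρ : ∀ h, ρ h ∘ₗ LinearMap.mul' R A = LinearMap.mul' R A ∘ₗ tensorAct ρ ρ (Coalgebra.comul h))
include hρ

lemma tensorAct_comp_rTensor_mul' (σ : C →ₐ[R] Module.End R N) (X : H ⊗[R] C) :
    tensorAct ρ σ X ∘ₗ (LinearMap.mul' R A).rTensor N =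
      (LinearMap.mul' R A).rTensor N ∘ₗ
        tensorAct (tensorAct ρ ρ) σ (map Coalgebra.comul LinearMap.id X) := by
  induction X using TensorProduct.induction_on with
  | zero => simp
  | tmul h c =>
    simp only [tensorAct_tmul, map_tmul, LinearMap.id_apply, LinearMap.map_comp_rTensor,
      LinearMap.rTensor_comp_map, hρ]
  | add X X' hX hX' =>
    simp only [map_add, LinearMap.add_comp, LinearMap.comp_add, hX, hX']

lemma tensorAct_comp_lTensor_mul' (σ : C →ₐ[R] Module.End R N) (X : C ⊗[R] H) :
    tensorAct σ ρ X ∘ₗ (LinearMap.mul' R A).lTensor N =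
      (LinearMap.mul' R A).lTensor N ∘ₗ
        tensorAct σ (tensorAct ρ ρ) (map LinearMap.id Coalgebra.comul X) := by
  induction X using TensorProduct.induction_on with
  | zero => simp
  | tmul c h =>
    simp only [tensorAct_tmul, map_tmul, LinearMap.id_apply, LinearMap.map_comp_lTensor,
      LinearMap.lTensor_comp_map, hρ]
  | add X X' hX hX' =>
    simp only [map_add, LinearMap.add_comp, LinearMap.comp_add, hX, hX']

end ModuleAlgebra

lemma inv_cocycle {R H : Type*} [CommSemiring R] [Semiring H] [Bialgebra R H]
    {F Finv : H ⊗[R] H} (hF : F * Finv = 1) (hF' : Finv * F = 1)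
    (hcocycle : (F ⊗ₜ[R] (1 : H)) * map Coalgebra.comul LinearMap.id F =
      (Algebra.TensorProduct.assoc R R R H H H).symm
        (((1 : H) ⊗ₜ[R] F) * map LinearMap.id Coalgebra.comul F)) :
    map Coalgebra.comul LinearMap.id Finv * (Finv ⊗ₜ[R] (1 : H)) =
      (Algebra.TensorProduct.assoc R R R H H H).symm
        (map LinearMap.id Coalgebra.comul Finv * ((1 : H) ⊗ₜ[R] Finv)) := by
  obtain ⟨ΔL, hΔL⟩ : ∃ ΔL : H ⊗[R] H →ₐ[R] (H ⊗[R] H) ⊗[R] H,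
      ∀ x, map Coalgebra.comul LinearMap.id x = ΔL x :=
    ⟨Algebra.TensorProduct.map (Bialgebra.comulAlgHom R H) (AlgHom.id R H), fun _ => rfl⟩
  obtain ⟨ΔR, hΔR⟩ : ∃ ΔR : H ⊗[R] H →ₐ[R] H ⊗[R] (H ⊗[R] H),
      ∀ x, map LinearMap.id Coalgebra.comul x = ΔR x :=
    ⟨Algebra.TensorProduct.map (AlgHom.id R H) (Bialgebra.comulAlgHom R H), fun _ => rfl⟩
  simp only [hΔL, hΔR] at hcocycle ⊢
  -- both sides are inverse to the two sides of the cocycle condition for `F`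
  refine left_inv_eq_right_inv (a := (F ⊗ₜ[R] (1 : H)) * ΔL F) ?_ ?_
  · rw [mul_assoc, ← mul_assoc (Finv ⊗ₜ 1), Algebra.TensorProduct.tmul_mul_tmul, hF', one_mul,
      ← Algebra.TensorProduct.one_def, one_mul, ← map_mul, hF', map_one]
  · rw [hcocycle, ← map_mul, mul_assoc, ← mul_assoc (ΔR F), ← map_mul, hF, map_one, one_mul,
      Algebra.TensorProduct.tmul_mul_tmul, hF, one_mul, ← Algebra.TensorProduct.one_def, map_one]

lemma twistMul_eq_mul'_tensorAct (act : H →ₐ[k] Module.End k A) (X : H ⊗[k] H) (x y : A) :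
    twistMul act X x y = LinearMap.mul' k A (tensorAct act act X (x ⊗ₜ y)) :=
  rfl

section TwistMul

variable {act : H →ₐ[k] Module.End k A}
  (hact : ∀ h, act h ∘ₗ LinearMap.mul' k A =
    LinearMap.mul' k A ∘ₗ tensorAct act act (Coalgebra.comul h))
include hact

lemma twistMul_twistMul_left (X Y : H ⊗[k] H) (a b c : A) :
    twistMul act X (twistMul act Y a b) c =
      LinearMap.mul' k A ((LinearMap.mul' k A).rTensor A
        (tensorAct (tensorAct act act) act (map Coalgebra.comul LinearMap.id X * Y ⊗ₜ 1)
          ((a ⊗ₜ b) ⊗ₜ c))) := by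
  have hY : LinearMap.mul' k A (tensorAct act act Y (a ⊗ₜ b)) ⊗ₜ c =
      (LinearMap.mul' k A).rTensor A
        (tensorAct (tensorAct act act) act (Y ⊗ₜ 1) ((a ⊗ₜ b) ⊗ₜ c)) := by
    simp
  rw [twistMul_eq_mul'_tensorAct, twistMul_eq_mul'_tensorAct, hY, map_mul, Module.End.mul_apply]
  exact congrArg _ (LinearMap.congr_fun (tensorAct_comp_rTensor_mul' hact act X) _)

lemma twistMul_twistMul_right (X Y : H ⊗[k] H) (a b c : A) :
    twistMul act X a (twistMul act Y b c) =
      LinearMap.mul' k A ((LinearMap.mul' k A).lTensor A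
        (tensorAct act (tensorAct act act) (map LinearMap.id Coalgebra.comul X * 1 ⊗ₜ Y)
          (a ⊗ₜ (b ⊗ₜ c)))) := by
  have hY : a ⊗ₜ LinearMap.mul' k A (tensorAct act act Y (b ⊗ₜ c)) =
      (LinearMap.mul' k A).lTensor A
        (tensorAct act (tensorAct act act) (1 ⊗ₜ Y) (a ⊗ₜ (b ⊗ₜ c))) := by
    simp
  rw [twistMul_eq_mul'_tensorAct, twistMul_eq_mul'_tensorAct, hY, map_mul, Module.End.mul_apply]
  exact congrArg _ (LinearMap.congr_fun (tensorAct_comp_lTensor_mul' hact act X) _)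

end TwistMul

theorem twistMul_assoc_general (act : H →ₐ[k] Module.End k A)
    (hact_mul : ∀ (h : H) (a b : A),
      act h (a * b) = LinearMap.mul' k A (act2 act (Coalgebra.comul h) (a ⊗ₜ[k] b)))
    (F Finv : H ⊗[k] H) (hF : F * Finv = 1) (hF' : Finv * F = 1)
    (hcocycle :
      ((F ⊗ₜ[k] (1 : H)) * TensorProduct.map Coalgebra.comul LinearMap.id F) =
        (Algebra.TensorProduct.assoc k k k H H H).symm
          (((1 : H) ⊗ₜ[k] F) * TensorProduct.map LinearMap.id Coalgebra.comul F))
    (a b c : A) :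
    twistMul act Finv (twistMul act Finv a b) c =
      twistMul act Finv a (twistMul act Finv b c) := by
  have hact : ∀ h, act h ∘ₗ LinearMap.mul' k A =
      LinearMap.mul' k A ∘ₗ tensorAct act act (Coalgebra.comul h) :=
    fun h => TensorProduct.ext' (hact_mul h)
  rw [twistMul_twistMul_left hact, twistMul_twistMul_right hact, inv_cocycle hF hF' hcocycle,
    ← assoc_symm_tmul, tensorAct_assoc_symm_apply, mul'_rTensor_mul'_assoc_symm]

/-- if `F` is an invertible twist satisfying the cocycle condition, then the
twisted product on a left `H`-module algebra `A` is associative. -/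
theorem twistMul_assoc (act : H →ₐ[k] Module.End k A)
    (hact_mul : ∀ (h : H) (a b : A),
      act h (a * b) = LinearMap.mul' k A (act2 act (Coalgebra.comul h) (a ⊗ₜ[k] b)))
    (hact_one : ∀ h : H, act h (1 : A) = Coalgebra.counit (R := k) h • (1 : A))
    (F Finv : H ⊗[k] H) (hF : F * Finv = 1) (hF' : Finv * F = 1)
    (hcocycle :
      ((F ⊗ₜ[k] (1 : H)) * TensorProduct.map Coalgebra.comul LinearMap.id F) =
        (Algebra.TensorProduct.assoc k k k H H H).symm
          (((1 : H) ⊗ₜ[k] F) * TensorProduct.map LinearMap.id Coalgebra.comul F))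
    (a b c : A) :
    twistMul act Finv (twistMul act Finv a b) c =
      twistMul act Finv a (twistMul act Finv b c) :=
  twistMul_assoc_general act hact_mul F Finv hF hF' hcocycle a b c
end
end

section
/- Let a₀, p, q, z₀ ∈ ℝ with a₀ ≠ 0, and define E : ℝ → G by E(t) := ( t a₀, ( (e^{2ta₀} − 1)p/(2a₀), (1 − e^{−2ta₀})q/(2a₀) ), t z₀ + t p q/(2a₀) + p q (e^{−2ta₀} − e^{2ta₀})/(8a₀²) ). Then E is a one-parameter subgroup of G: E(t)·E(s) = E(t+s) for all s, t ∈ ℝ (in particular E(0) is the identity of G). -/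
noncomputable section

abbrev Dbl := ℝ × (ℝ × ℝ) × ℝ

def dmul (x y : Dbl) : Dbl :=
  (x.1 + y.1,
   (x.2.1.1 + Real.exp (2 * x.1) * y.2.1.1,
    x.2.1.2 + Real.exp (-2 * x.1) * y.2.1.2),
   x.2.2 + y.2.2 + (1 / 2) * (x.2.1.1 * Real.exp (-2 * x.1) * y.2.1.2
      - x.2.1.2 * Real.exp (2 * x.1) * y.2.1.1))

def expCurve (a₀ p q z₀ : ℝ) (t : ℝ) : Dbl :=
  (t * a₀,
   ((Real.exp (2 * t * a₀) - 1) * p / (2 * a₀),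
    (1 - Real.exp (-2 * t * a₀)) * q / (2 * a₀)),
   t * z₀ + t * p * q / (2 * a₀)
     + p * q * (Real.exp (-2 * t * a₀) - Real.exp (2 * t * a₀)) / (8 * a₀ ^ 2))

/-- the curve `E` is a one-parameter subgroup of the double group:
`E(t)·E(s) = E(t+s)` for all `s, t` (in particular `E(0)` is the identity). -/
theorem expCurve_one_parameter (a₀ p q z₀ : ℝ) (ha : a₀ ≠ 0) :
    (∀ t s : ℝ, dmul (expCurve a₀ p q z₀ t) (expCurve a₀ p q z₀ s) =
      expCurve a₀ p q z₀ (t + s)) ∧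
    expCurve a₀ p q z₀ 0 = ((0 : ℝ), ((0 : ℝ), (0 : ℝ)), (0 : ℝ)) := by
  constructor
  · intro t s
    have e1 : Real.exp (2 * (t + s) * a₀) = Real.exp (2 * t * a₀) * Real.exp (2 * s * a₀) := by
      rw [← Real.exp_add]; ring_nf
    have e2 : Real.exp (-2 * (t + s) * a₀) = Real.exp (-2 * t * a₀) * Real.exp (-2 * s * a₀) := by
      rw [← Real.exp_add]; ring_nf
    have e3 : Real.exp (2 * t * a₀) * Real.exp (-2 * t * a₀) = 1 := by
      rw [← Real.exp_add]; ring_nf; exact Real.exp_zero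
    have e4 : Real.exp (2 * s * a₀) * Real.exp (-2 * s * a₀) = 1 := by
      rw [← Real.exp_add]; ring_nf; exact Real.exp_zero
    have eA : Real.exp (2 * (t * a₀)) = Real.exp (2 * t * a₀) := by ring_nf
    have eA' : Real.exp (-(2 * (t * a₀))) = Real.exp (-2 * t * a₀) := by ring_nf
    have eA'' : Real.exp (-2 * (t * a₀)) = Real.exp (-2 * t * a₀) := by ring_nf
    simp only [dmul, expCurve, Prod.mk.injEq, e1, e2, eA, eA', eA'']
    set A := Real.exp (2 * t * a₀) with hA
    set A' := Real.exp (-2 * t * a₀) with hA'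
    set B := Real.exp (2 * s * a₀) with hB
    set B' := Real.exp (-2 * s * a₀) with hB'
    refine ⟨by ring, ⟨by ring, by ring⟩, ?_⟩
    linear_combination (p * q * (B - B') / (8 * a₀ ^ 2)) * e3
  · simp [expCurve]
end
end

section
/- Let G be the group ℝ × ℝ² × ℝ with multiplication (a,(v₁,v₂),z)·(a',(v'₁,v'₂),z') := (a+a', (v₁+e^{2a}v'₁, v₂+e^{−2a}v'₂), z+z'+(1/2)(v₁e^{−2a}v'₂ − v₂e^{2a}v'₁)). Define ι_S(a,n) := (a, (e^{2a}n, 0), 0) and ι_*(ν,κ) := (ν, (−κe^{2ν}, (e^{−2ν}−1)/2), −κ(1+e^{2ν})/4), both elements of G. Then for all a, n, ν, κ ∈ ℝ with 1 + e^{−2a}(e^{−2ν}−1) > 0, there exist ā, n̄ ∈ ℝ such that ι_S(a,n)·ι_*(ν,κ) = ι_*(ν̄,κ̄)·ι_S(ā,n̄), where ν̄ := −(1/2)·log(1 + e^{−2a}(e^{−2ν}−1)) and κ̄ := κ − n(e^{−2ν}−1). -/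
noncomputable section

/-- The embedding `ι_S(a,n) = (a, (e^{2a}n, 0), 0)` of the `ax+b` group into the double. -/
def iotaS (a n : ℝ) : Dbl :=
  (a, (Real.exp (2 * a) * n, 0), 0)

/-- The embedding `ι_*(ν,κ) = (ν, (−κe^{2ν}, (e^{−2ν}−1)/2), −κ(1+e^{2ν})/4)` of the dual
group into the double. -/
def iotaStar (ν κ : ℝ) : Dbl :=
  (ν, (-κ * Real.exp (2 * ν), (Real.exp (-2 * ν) - 1) / 2),
   -κ * (1 + Real.exp (2 * ν)) / 4)

/-!
Both products are computed in closed form. Matching the `ℝ`-components forces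
`ā = a + ν - ν̄`, the second `ℝ²`-component forces `e^{-2ν̄} = 1 + e^{-2a}(e^{-2ν} - 1)`
(solvable exactly under the positivity hypothesis), the first `ℝ²`-component then determines
`n̄`, and with `κ̄ = κ - n(e^{-2ν} - 1)` the central components agree identically.
-/

open Real

lemma exp_neg_two_mul_mul_exp_two_mul (x : ℝ) : exp (-2 * x) * exp (2 * x) = 1 := by
  rw [← exp_add, show -2 * x + 2 * x = 0 by ring, exp_zero]

lemma dmul_iotaS_iotaStar (a n ν κ : ℝ) :
    dmul (iotaS a n) (iotaStar ν κ) =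
      (a + ν, (exp (2 * a) * (n - κ * exp (2 * ν)), exp (-2 * a) * (exp (-2 * ν) - 1) / 2),
        (n * (exp (-2 * ν) - 1) - κ * (1 + exp (2 * ν))) / 4) := by
  have ha := exp_neg_two_mul_mul_exp_two_mul a
  simp only [dmul, iotaS, iotaStar, Prod.mk.injEq]
  refine ⟨trivial, ⟨by ring, by ring⟩, ?_⟩
  linear_combination n * (exp (-2 * ν) - 1) / 4 * ha

lemma dmul_iotaStar_iotaS (ν κ a n : ℝ) :
    dmul (iotaStar ν κ) (iotaS a n) =
      (ν + a, (exp (2 * ν) * (exp (2 * a) * n - κ), (exp (-2 * ν) - 1) / 2),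
        -(κ * (1 + exp (2 * ν)) + (1 - exp (2 * ν)) * (exp (2 * a) * n)) / 4) := by
  have hν := exp_neg_two_mul_mul_exp_two_mul ν
  simp only [dmul, iotaS, iotaStar, Prod.mk.injEq]
  refine ⟨trivial, ⟨by ring, by ring⟩, ?_⟩
  linear_combination -(exp (2 * a) * n) / 4 * hν

theorem dmul_iotaS_iotaStar_eq_dmul_iotaStar_iotaS (a n ν κ νbar : ℝ)
    (hνbar : exp (-2 * νbar) = 1 + exp (-2 * a) * (exp (-2 * ν) - 1)) :
    dmul (iotaS a n) (iotaStar ν κ) =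
      dmul (iotaStar νbar (κ - n * (exp (-2 * ν) - 1)))
        (iotaS (a + ν - νbar) (exp (-2 * (a + ν - νbar)) *
          (κ - n * (exp (-2 * ν) - 1) + exp (2 * a) * exp (-2 * νbar) * (n - κ * exp (2 * ν))))) := by
  have habar := exp_neg_two_mul_mul_exp_two_mul (a + ν - νbar)
  have hνbar' := exp_neg_two_mul_mul_exp_two_mul νbar
  have ha := exp_neg_two_mul_mul_exp_two_mul a
  have hν := exp_neg_two_mul_mul_exp_two_mul ν
  rw [dmul_iotaS_iotaStar, dmul_iotaStar_iotaS]
  set X := n - κ * exp (2 * ν)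
  set m := κ - n * (exp (-2 * ν) - 1) + exp (2 * a) * exp (-2 * νbar) * X
  refine Prod.ext (by ring) (Prod.ext (Prod.ext ?_ ?_) ?_) <;> dsimp only
  · linear_combination -(exp (2 * νbar) * m) * habar - exp (2 * a) * X * hνbar'
  · linear_combination (-1 / 2) * hνbar
  · linear_combination ((1 - exp (2 * νbar)) * m * habar - exp (2 * a) * X * hνbar'
      + (exp (-2 * ν) - 1) * X * ha + exp (2 * a) * X * hνbar - κ * hν) / 4

/-- the local dressing decomposition: whenever
`1 + e^{−2a}(e^{−2ν}−1) > 0` there are `ā, n̄` with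
`ι_S(a,n)·ι_*(ν,κ) = ι_*(ν̄,κ̄)·ι_S(ā,n̄)` where
`ν̄ = −(1/2)log(1 + e^{−2a}(e^{−2ν}−1))` and `κ̄ = κ − n(e^{−2ν}−1)`. -/
theorem local_dressing_decomposition (a n ν κ : ℝ)
    (hpos : 1 + Real.exp (-2 * a) * (Real.exp (-2 * ν) - 1) > 0) :
    ∃ abar nbar : ℝ,
      dmul (iotaS a n) (iotaStar ν κ) =
        dmul
          (iotaStar
            (-(1 / 2) * Real.log (1 + Real.exp (-2 * a) * (Real.exp (-2 * ν) - 1)))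
            (κ - n * (Real.exp (-2 * ν) - 1)))
          (iotaS abar nbar) :=
  ⟨_, _, dmul_iotaS_iotaStar_eq_dmul_iotaStar_iotaS a n ν κ _ <| by
    rw [show ∀ t : ℝ, -2 * (-(1 / 2) * t) = t from fun t => by ring, exp_log hpos]⟩

end
end

section
/- Let G be the group ℝ × ℝ² × ℝ with multiplication (a,(v₁,v₂),z)·(a',(v'₁,v'₂),z') := (a+a', (v₁+e^{2a}v'₁, v₂+e^{−2a}v'₂), z+z'+(1/2)(v₁e^{−2a}v'₂ − v₂e^{2a}v'₁)). Define ι_S(a,n) := (a, (e^{2a}n, 0), 0) and ι_*(ν,κ) := (ν, (−κe^{2ν}, (e^{−2ν}−1)/2), −κ(1+e^{2ν})/4). Then the multiplication map ℝ⁴ → G, (ν,κ,a,n) ↦ ι_*(ν,κ)·ι_S(a,n), is injective. -/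
noncomputable section

/-- the multiplication map `(ν,κ,a,n) ↦ ι_*(ν,κ)·ι_S(a,n)` from `ℝ⁴` to
the double group is injective. -/
theorem multiplication_map_injective :
    Function.Injective
      (fun p : ℝ × ℝ × ℝ × ℝ => dmul (iotaStar p.1 p.2.1) (iotaS p.2.2.1 p.2.2.2)) := by
  rintro ⟨ν, κ, a, n⟩ ⟨ν', κ', a', n'⟩ h
  simp only [dmul, iotaS, iotaStar, Prod.mk.injEq] at h
  obtain ⟨h1, ⟨h2, h3⟩, h4⟩ := h
  have hν : ν = ν' := by
    have := Real.exp_injective (by linarith : Real.exp (-2 * ν) = Real.exp (-2 * ν'))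
    linarith
  subst hν
  have ha : a = a' := by linarith
  subst ha
  have e1 := Real.exp_pos (2 * ν)
  have e2 := Real.exp_pos (2 * a)
  have hE : Real.exp (2 * ν) * Real.exp (-2 * ν) = 1 := by
    rw [← Real.exp_add]; ring_nf; exact Real.exp_zero
  have h2' : Real.exp (2 * ν) * (Real.exp (2 * a) * (n - n')) = Real.exp (2 * ν) * (κ - κ') := by
    linear_combination h2
  have hAn : Real.exp (2 * a) * (n - n') = κ - κ' := mul_left_cancel₀ e1.ne' h2'
  have hκ : κ = κ' := by
    linear_combination (-2 : ℝ) * h4 -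
      ((Real.exp (-2 * ν) * Real.exp (2 * ν) - Real.exp (2 * ν)) / 2) * hAn -
      ((κ - κ') / 2) * hE
  have hn : n = n' := by
    subst hκ
    have : Real.exp (2 * ν) * (Real.exp (2 * a) * n) = Real.exp (2 * ν) * (Real.exp (2 * a) * n') := by linarith
    have := mul_left_cancel₀ (ne_of_gt e1) this
    exact mul_left_cancel₀ (ne_of_gt e2) this
  simp [hκ, hn]

end
end
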